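/- arXiv:2504.12190 — 5 statements merged into one kernel-verified Lean document; each statement's English description precedes it below -/
import Mathlib

section
/- Let π̃ be a measure on a measurable space S, 𝔰 a π̃-measure-preserving measurable involution, T : S → S a π̃-measure-preserving measurable bijection satisfying T⁻¹ = 𝔰 ∘ T ∘ 𝔰, and λ̃ : S → [0,∞) a measurable function invariant under 𝔰 ∘ T (i.e. λ̃ ∘ 𝔰 ∘ T = λ̃). Define the kernel μ̃(a, db) = λ̃(a) δ_{T(a)}(db). Then μ̃ is in skew-detailed balance with respect to 𝔰 and π̃: for every suitably integrable f : S × S → ℝ, ∫∫ f(a,b) π̃(da) μ̃(a,db) = ∫∫ f(𝔰(a'), 𝔰(b')) π̃(db') μ̃(b', da'). -/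
open MeasureTheory ENNReal

/-! Integrating against `lam a • δ_{T a}` evaluates `f` on the graph of `T`, so the two sides
are `∫ lam a * f (a, T a)` and `∫ lam b * f (s (T b), s b)`. The change of variables
`a = s (T b)` turns the first into the second: `s ∘ T` preserves `πt` and `lam`, and
`T ∘ s ∘ T = s`. -/

theorem lintegral_smul_dirac {α : Type*} [MeasurableSpace α] {g : α → ℝ≥0∞}
    (hg : Measurable g) (c : ℝ≥0∞) (x : α) :
    ∫⁻ b, g b ∂(c • Measure.dirac x) = c * g x := by
  rw [lintegral_smul_measure, lintegral_dirac' x hg, smul_eq_mul]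

theorem lintegral_lintegral_smul_dirac {α β : Type*} [MeasurableSpace α] [MeasurableSpace β]
    (ν : Measure α) {f : α × β → ℝ≥0∞} (hf : Measurable f) (c : α → ℝ≥0∞) (T : α → β) :
    ∫⁻ a, ∫⁻ b, f (a, b) ∂(c a • Measure.dirac (T a)) ∂ν = ∫⁻ a, c a * f (a, T a) ∂ν :=
  lintegral_congr fun _ => lintegral_smul_dirac (hf.comp measurable_prodMk_left) _ _

theorem deterministic_kernel_skew_detailed_balance_general
    {S : Type*} [MeasurableSpace S]
    (πt : Measure S)
    (s : S → S) (hs : Measurable s) (hinv : ∀ a, s (s a) = a)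
    (hsπt : MeasurePreserving s πt πt)
    (T : S → S) (hT : Measurable T)
    (hTπt : MeasurePreserving T πt πt)
    (hTskew : ∀ a, s (T (s (T a))) = a)
    (lam : S → ℝ≥0∞) (hlam : Measurable lam)
    (hlaminv : ∀ a, lam (s (T a)) = lam a)
    (mu : S → Measure S) (hmu : ∀ a, mu a = lam a • Measure.dirac (T a)) :
    ∀ f : S × S → ℝ≥0∞, Measurable f →
      ∫⁻ a, ∫⁻ b, f (a, b) ∂(mu a) ∂πt
        = ∫⁻ b', ∫⁻ a', f (s a', s b') ∂(mu b') ∂πt := by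
  intro f hf
  have hTsT : ∀ a, T (s (T a)) = s a := fun a =>
    Function.Involutive.injective hinv (by rw [hTskew, hinv])
  have hswap : Measurable fun p : S × S => f (s p.2, s p.1) :=
    hf.comp ((hs.comp measurable_snd).prodMk (hs.comp measurable_fst))
  simp_rw [hmu]
  rw [lintegral_lintegral_smul_dirac πt hf, lintegral_lintegral_smul_dirac πt hswap,
    ← (hsπt.comp hTπt).lintegral_comp (f := fun a => lam a * f (a, T a))
      (hlam.mul (hf.comp (measurable_id.prodMk hT)))]
  simp only [Function.comp_apply, hlaminv, hTsT]

/-- The deterministic rate kernel `μ̃(a, db) = λ̃(a) δ_{T(a)}(db)` is in skew-detailed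
balance with respect to the involution `𝔰` and the measure `π̃`. -/
theorem deterministic_kernel_skew_detailed_balance
    {S : Type*} [MeasurableSpace S]
    (πt : Measure S)
    (s : S → S) (hs : Measurable s) (hinv : ∀ a, s (s a) = a)
    (hsπt : MeasurePreserving s πt πt)
    (T : S → S) (hT : Measurable T) (hTbij : Function.Bijective T)
    (hTπt : MeasurePreserving T πt πt)
    (hTskew : ∀ a, s (T (s (T a))) = a)
    (lam : S → ℝ≥0∞) (hlam : Measurable lam)
    (hlaminv : ∀ a, lam (s (T a)) = lam a)
    (mu : S → Measure S) (hmu : ∀ a, mu a = lam a • Measure.dirac (T a)) :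
    ∀ f : S × S → ℝ≥0∞, Measurable f →
      ∫⁻ a, ∫⁻ b, f (a, b) ∂(mu a) ∂πt
        = ∫⁻ b', ∫⁻ a', f (s a', s b') ∂(mu b') ∂πt :=
  deterministic_kernel_skew_detailed_balance_general πt s hs hinv hsπt T hT hTπt hTskew lam hlam
    hlaminv mu hmu
end

section
/- Let U ∈ C²(ℝ^d) be such that h(x) = U(x) − (κ/2)‖x‖² is convex for ‖x‖ > r (κ, r > 0), and let ℓ be the smallest eigenvalue of ∇²h over the closed ball of radius r. Then for any q, δ ∈ ℝ^d, with R₁ = ∫₀¹ (1−α)∇²U(q + αδ)δ dα and R₂ = ∫₀¹ ∇²U(q + αδ)δ dα, one has ⟨δ, R₁ − R₂⟩ ≤ −(κ/2)‖δ‖² + 2r·max{0, −ℓ}·‖δ‖. -/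
/-!
With `g α = ⟪δ, ∇²h(q + αδ) δ⟫` and `∇²U = ∇²h + κ I`, integrating the Taylor remainders
gives `⟪δ, R₁ - R₂⟫ = -∫₀¹ α g α dα - (κ/2)‖δ‖²`. Now `g ≥ 0` except at times when
`q + αδ` lies in the ball of radius `r`, where `g ≥ ℓ‖δ‖² ≥ -max 0 (-ℓ) ‖δ‖²`; and the line
`α ↦ q + αδ` spends a set of times of length at most `2r/‖δ‖` in that ball.
-/

open MeasureTheory intervalIntegral Set InnerProductSpace

section Integral

variable {E : Type*} [NormedAddCommGroup E]

theorem integral_one_sub_smul_sub_integral [NormedSpace ℝ E] {f : ℝ → E} (hf : Continuous f) :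
    (∫ α in (0:ℝ)..1, (1 - α) • f α) - ∫ α in (0:ℝ)..1, f α = -∫ α in (0:ℝ)..1, α • f α := by
  have hf' : Continuous fun α : ℝ => (1 - α) • f α := by fun_prop
  rw [← integral_sub (hf'.intervalIntegrable _ _) (hf.intervalIntegrable _ _),
    ← intervalIntegral.integral_neg]
  congr 1 with α
  rw [sub_smul, one_smul]
  abel

theorem inner_integral_one_sub_smul_sub_integral [InnerProductSpace ℝ E] [CompleteSpace E]
    (v : E) {f : ℝ → E} (hf : Continuous f) :
    inner ℝ v ((∫ α in (0:ℝ)..1, (1 - α) • f α) - ∫ α in (0:ℝ)..1, f α)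
      = -∫ α in (0:ℝ)..1, α * inner ℝ v (f α) := by
  have hf' : Continuous fun α : ℝ => α • f α := by fun_prop
  rw [integral_one_sub_smul_sub_integral hf, inner_neg_right, ← innerSL_apply_apply ℝ,
    ← (innerSL ℝ v).intervalIntegral_comp_comm (hf'.intervalIntegrable _ _)]
  simp only [innerSL_apply_apply, real_inner_smul_right]

theorem volume_setOf_norm_add_smul_le [NormedSpace ℝ E] (q : E) {δ : E} (hδ : δ ≠ 0) (r : ℝ) :
    volume {α : ℝ | ‖q + α • δ‖ ≤ r} ≤ ENNReal.ofReal (2 * r / ‖δ‖) := by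
  refine (Real.volume_le_diam _).trans (Metric.ediam_le fun α hα β hβ => ?_)
  rw [edist_dist, Real.dist_eq]
  refine ENNReal.ofReal_le_ofReal ((le_div_iff₀ (norm_pos_iff.2 hδ)).2 ?_)
  calc |α - β| * ‖δ‖ = ‖(q + α • δ) - (q + β • δ)‖ := by
        rw [add_sub_add_left_eq_sub, ← sub_smul, norm_smul, Real.norm_eq_abs]
    _ ≤ ‖q + α • δ‖ + ‖q + β • δ‖ := norm_sub_le _ _
    _ ≤ 2 * r := by linarith [hα.out, hβ.out]

end Integral

theorem neg_mul_measureReal_le_integral_mul {g : ℝ → ℝ} (hg : Continuous g) {S : Set ℝ}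
    (hS : MeasurableSet S) {c : ℝ} (hc : 0 ≤ c) (hgS : ∀ α ∈ Icc (0:ℝ) 1, α ∈ S → -c ≤ g α)
    (hgSc : ∀ α ∈ Icc (0:ℝ) 1, α ∉ S → 0 ≤ g α) :
    -(c * volume.real (S ∩ Ioc 0 1)) ≤ ∫ α in (0:ℝ)..1, α * g α := by
  have hint : IntervalIntegrable (S.indicator fun _ => -c) volume 0 1 :=
    have hconst := intervalIntegrable_const (μ := volume) (a := 0) (b := 1) (c := -c)
    ⟨hconst.1.indicator hS, hconst.2.indicator hS⟩
  calc -(c * volume.real (S ∩ Ioc 0 1)) = ∫ α in (0:ℝ)..1, S.indicator (fun _ => -c) α := by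
        rw [integral_of_le zero_le_one, MeasureTheory.integral_indicator hS,
          Measure.restrict_restrict hS, setIntegral_const, smul_eq_mul, mul_neg, mul_comm]
    _ ≤ ∫ α in (0:ℝ)..1, α * g α := by
        refine integral_mono_on zero_le_one hint
          ((continuous_id.mul hg).intervalIntegrable _ _) fun α hα => ?_
        by_cases hαS : α ∈ S
        · rw [indicator_of_mem hαS]
          nlinarith [hgS α hα hαS, hα.1, hα.2]
        · rw [indicator_of_notMem hαS]
          exact mul_nonneg hα.1 (hgSc α hα hαS)

section Gradient

variable {F : Type*} [NormedAddCommGroup F] [InnerProductSpace ℝ F] {U : F → ℝ}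

theorem ContDiff.sub_mul_norm_sq {n : WithTop ℕ∞} (hU : ContDiff ℝ n U) (κ : ℝ) :
    ContDiff ℝ n fun y => U y - κ / 2 * ‖y‖ ^ 2 :=
  hU.sub (contDiff_const.mul (contDiff_norm_sq ℝ))

variable [CompleteSpace F]

theorem contDiff_gradient {n : WithTop ℕ∞} (hU : ContDiff ℝ (n + 1) U) :
    ContDiff ℝ n (gradient U) :=
  (toDual ℝ F).symm.contDiff.comp (hU.fderiv_right le_rfl)

theorem continuous_fderiv_gradient_segment (hU : ContDiff ℝ 2 U) (q δ : F) :
    Continuous fun α : ℝ => fderiv ℝ (gradient U) (q + α • δ) δ :=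
  ((contDiff_gradient (n := 1) hU).continuous_fderiv one_ne_zero |>.comp (by fun_prop))
    |>.clm_apply continuous_const

theorem hasGradientAt_sub_mul_norm_sq {x : F} (hU : DifferentiableAt ℝ U x) (κ : ℝ) :
    HasGradientAt (fun y => U y - κ / 2 * ‖y‖ ^ 2) (gradient U x - κ • x) x := by
  rw [hasGradientAt_iff_hasFDerivAt, map_sub, map_smul, toDual_gradient]
  refine (hU.hasFDerivAt.sub
    ((hasStrictFDerivAt_norm_sq x).hasFDerivAt.const_smul (κ / 2))).congr_fderiv ?_
  ext y
  simp [toDual_apply_apply]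
  ring

theorem gradient_sub_mul_norm_sq (hU : Differentiable ℝ U) (κ : ℝ) :
    gradient (fun y => U y - κ / 2 * ‖y‖ ^ 2) = fun x => gradient U x - κ • x :=
  gradient_eq fun x => hasGradientAt_sub_mul_norm_sq (hU x) κ

theorem fderiv_gradient_sub_mul_norm_sq_apply (hU : ContDiff ℝ 2 U) (κ : ℝ) (x v : F) :
    fderiv ℝ (gradient fun y => U y - κ / 2 * ‖y‖ ^ 2) x v
      = fderiv ℝ (gradient U) x v - κ • v := by
  have hgrad : HasFDerivAt (fun x => gradient U x - κ • x)
      (fderiv ℝ (gradient U) x - κ • ContinuousLinearMap.id ℝ F) x :=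
    ((contDiff_gradient (n := 1) hU).differentiable one_ne_zero x).hasFDerivAt.sub
      ((hasFDerivAt_id x).const_smul κ)
  rw [gradient_sub_mul_norm_sq (hU.differentiable two_ne_zero), hgrad.fderiv]
  rfl

theorem inner_remainder_eq (hU : ContDiff ℝ 2 U) (κ : ℝ) (q δ : F) :
    inner ℝ δ ((∫ α in (0:ℝ)..1, (1 - α) • fderiv ℝ (gradient U) (q + α • δ) δ)
        - ∫ α in (0:ℝ)..1, fderiv ℝ (gradient U) (q + α • δ) δ)
      = -(∫ α in (0:ℝ)..1,
          α * inner ℝ δ (fderiv ℝ (gradient fun y => U y - κ / 2 * ‖y‖ ^ 2) (q + α • δ) δ))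
        - κ / 2 * ‖δ‖ ^ 2 := by
  set g : ℝ → ℝ := fun α =>
    inner ℝ δ (fderiv ℝ (gradient fun y => U y - κ / 2 * ‖y‖ ^ 2) (q + α • δ) δ)
  have hg : Continuous g :=
    continuous_const.inner (continuous_fderiv_gradient_segment (hU.sub_mul_norm_sq κ) q δ)
  calc _ = -∫ α in (0:ℝ)..1, α * inner ℝ δ (fderiv ℝ (gradient U) (q + α • δ) δ) :=
        inner_integral_one_sub_smul_sub_integral δ (continuous_fderiv_gradient_segment hU q δ)
    _ = -∫ α in (0:ℝ)..1, (α * g α + α * (κ * ‖δ‖ ^ 2)) := by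
        refine congrArg Neg.neg (integral_congr fun α _ => ?_)
        simp only [g, fderiv_gradient_sub_mul_norm_sq_apply hU, inner_sub_right,
          real_inner_smul_right, real_inner_self_eq_norm_sq]
        ring
    _ = _ := by
        rw [integral_add (f := fun α => α * g α) ((continuous_id.mul hg).intervalIntegrable _ _)
            (by simp), intervalIntegral.integral_mul_const, integral_id]
        ring

end Gradient

theorem remainder_bound_general
    {d : ℕ} (U : EuclideanSpace ℝ (Fin d) → ℝ) (hU : ContDiff ℝ 2 U)
    (κ r ℓ : ℝ) (hr : 0 < r)
    (h : EuclideanSpace ℝ (Fin d) → ℝ)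
    (hh : ∀ x, h x = U x - κ / 2 * ‖x‖ ^ 2)
    (hconv : ∀ x : EuclideanSpace ℝ (Fin d), r < ‖x‖ →
      ∀ v, (0:ℝ) ≤ inner ℝ v ((fderiv ℝ (gradient h) x) v))
    (hℓ : ∀ x : EuclideanSpace ℝ (Fin d), ‖x‖ ≤ r →
      ∀ v, ℓ * ‖v‖ ^ 2 ≤ inner ℝ v ((fderiv ℝ (gradient h) x) v))
    (q δ R₁ R₂ : EuclideanSpace ℝ (Fin d))
    (hR₁ : R₁ = ∫ α in (0:ℝ)..1, (1 - α) • (fderiv ℝ (gradient U) (q + α • δ)) δ)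
    (hR₂ : R₂ = ∫ α in (0:ℝ)..1, (fderiv ℝ (gradient U) (q + α • δ)) δ) :
    (inner ℝ δ (R₁ - R₂) : ℝ) ≤ -(κ / 2) * ‖δ‖ ^ 2 + 2 * r * max 0 (-ℓ) * ‖δ‖ := by
  rcases eq_or_ne δ 0 with rfl | hδ
  · simp
  have hUh : (fun y => U y - κ / 2 * ‖y‖ ^ 2) = h := (funext hh).symm
  have hh2 : ContDiff ℝ 2 h := hUh ▸ hU.sub_mul_norm_sq κ
  set g : ℝ → ℝ := fun α => inner ℝ δ (fderiv ℝ (gradient h) (q + α • δ) δ)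
  have hg : Continuous g := continuous_const.inner (continuous_fderiv_gradient_segment hh2 q δ)
  set M := max 0 (-ℓ)
  set S := {α : ℝ | ‖q + α • δ‖ ≤ r}
  have hS : MeasurableSet S := (isClosed_le (by fun_prop) continuous_const).measurableSet
  have hvol : volume.real (S ∩ Ioc 0 1) ≤ 2 * r / ‖δ‖ :=
    ENNReal.toReal_le_of_le_ofReal (by positivity)
      ((measure_mono inter_subset_left).trans (volume_setOf_norm_add_smul_le q hδ r))
  have hℓM : -(M * ‖δ‖ ^ 2) ≤ ℓ * ‖δ‖ ^ 2 := by nlinarith [le_max_right 0 (-ℓ), sq_nonneg ‖δ‖]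
  have hlower : -(M * ‖δ‖ ^ 2 * volume.real (S ∩ Ioc 0 1)) ≤ ∫ α in (0:ℝ)..1, α * g α :=
    neg_mul_measureReal_le_integral_mul hg hS (by positivity)
      (fun α _ hα => hℓM.trans (hℓ _ hα δ)) (fun α _ hα => hconv _ (not_le.1 hα) δ)
  calc inner ℝ δ (R₁ - R₂) = -(∫ α in (0:ℝ)..1, α * g α) - κ / 2 * ‖δ‖ ^ 2 := by
        rw [hR₁, hR₂, inner_remainder_eq hU κ, hUh]
    _ ≤ M * ‖δ‖ ^ 2 * (2 * r / ‖δ‖) - κ / 2 * ‖δ‖ ^ 2 := by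
        have : M * ‖δ‖ ^ 2 * volume.real (S ∩ Ioc 0 1) ≤ M * ‖δ‖ ^ 2 * (2 * r / ‖δ‖) := by
          gcongr
        linarith
    _ = -(κ / 2) * ‖δ‖ ^ 2 + 2 * r * M * ‖δ‖ := by
        field_simp
        ring

/-- Bound on the remainder term for a potential that is `κ`-strongly convex outside a
ball of radius `r`, with Hessian eigenvalues bounded below by `ℓ` inside the ball. -/
theorem remainder_bound
    {d : ℕ} (U : EuclideanSpace ℝ (Fin d) → ℝ) (hU : ContDiff ℝ 2 U)
    (κ r ℓ : ℝ) (hκ : 0 < κ) (hr : 0 < r)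
    (h : EuclideanSpace ℝ (Fin d) → ℝ)
    (hh : ∀ x, h x = U x - κ / 2 * ‖x‖ ^ 2)
    (hconv : ∀ x : EuclideanSpace ℝ (Fin d), r < ‖x‖ →
      ∀ v, (0:ℝ) ≤ inner ℝ v ((fderiv ℝ (gradient h) x) v))
    (hℓ : ∀ x : EuclideanSpace ℝ (Fin d), ‖x‖ ≤ r →
      ∀ v, ℓ * ‖v‖ ^ 2 ≤ inner ℝ v ((fderiv ℝ (gradient h) x) v))
    (q δ R₁ R₂ : EuclideanSpace ℝ (Fin d))
    (hR₁ : R₁ = ∫ α in (0:ℝ)..1, (1 - α) • (fderiv ℝ (gradient U) (q + α • δ)) δ)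
    (hR₂ : R₂ = ∫ α in (0:ℝ)..1, (fderiv ℝ (gradient U) (q + α • δ)) δ) :
    (inner ℝ δ (R₁ - R₂) : ℝ) ≤ -(κ / 2) * ‖δ‖ ^ 2 + 2 * r * max 0 (-ℓ) * ‖δ‖ :=
  remainder_bound_general U hU κ r ℓ hr h hh hconv hℓ q δ R₁ R₂ hR₁ hR₂
end

section
/- Let U ∈ C²(ℝ^d) with h(x) = U(x) − (κ/2)‖x‖² convex for ‖x‖ > r, and suppose inf_{q} (U(q) + C) = 0 for some constant C. Then with C̃ = sup_{‖q‖ ≤ r} √(2κ(U(q) + C)), one has ‖∇U(q)‖ ≥ √(2κ(U(q) + C)) − C̃ for all q ∈ ℝ^d. -/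
open Set InnerProductSpace
open scoped RealInnerProductSpace Gradient

/-!
Fix `q` outside the ball and let `p = (r / ‖q‖) • q` be its radial projection onto the sphere.
The open segment from `q` to `p` stays outside the ball, where `U - κ/2 ‖·‖²` is convex, so
`U p ≥ U q + ⟪∇U q, p - q⟫ + κ/2 ‖p - q‖²`. With `δ = ‖p - q‖` and `G = ‖∇U q‖`, Cauchy–Schwarz
gives `U q + C ≤ U p + C + G δ - κ/2 δ²`, and completing the square, `2κGδ - κ²δ² ≤ G²`, yields
`2κ (U q + C) ≤ (C̃ + G)²` because `2κ (U p + C) ≤ C̃²`.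
-/

theorem tangent_le_of_second_deriv_nonneg {g g' g'' : ℝ → ℝ} {a b : ℝ} (hab : a < b)
    (hg : ∀ t, HasDerivAt g (g' t) t) (hg' : ∀ t, HasDerivAt g' (g'' t) t)
    (hg'' : ∀ t ∈ Ioo a b, 0 ≤ g'' t) :
    g a + g' a * (b - a) ≤ g b := by
  have hmono : MonotoneOn g' (Icc a b) :=
    monotoneOn_of_hasDerivWithinAt_nonneg (convex_Icc a b)
      (fun t _ => (hg' t).continuousAt.continuousWithinAt)
      (fun t _ => (hg' t).hasDerivWithinAt) (by simpa only [interior_Icc] using hg'')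
  obtain ⟨c, hc, hslope⟩ := exists_hasDerivAt_eq_slope g g' hab
    (fun t _ => (hg t).continuousAt.continuousWithinAt) (fun t _ => hg t)
  have hac : g' a ≤ g' c := hmono (left_mem_Icc.2 hab.le) (Ioo_subset_Icc_self hc) hc.1.le
  rw [eq_div_iff (sub_pos.2 hab).ne'] at hslope
  nlinarith [sub_pos.2 hab]

theorem lt_norm_of_mem_openSegment_of_sameRay {E : Type*} [SeminormedAddCommGroup E]
    [NormedSpace ℝ E] {x y z : E} {r : ℝ} (hxy : SameRay ℝ x y) (hx : r < ‖x‖) (hy : r ≤ ‖y‖)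
    (hz : z ∈ openSegment ℝ x y) : r < ‖z‖ := by
  obtain ⟨a, b, ha, hb, hab, rfl⟩ := hz
  rw [((hxy.nonneg_smul_left ha.le).nonneg_smul_right hb.le).norm_add,
    norm_smul_of_nonneg ha.le, norm_smul_of_nonneg hb.le]
  calc r = a * r + b * r := by rw [← add_mul, hab, one_mul]
    _ < a * ‖x‖ + b * ‖y‖ := add_lt_add_of_lt_of_le (by gcongr) (by gcongr)

theorem sqrt_two_mul_le_sqrt_two_mul_add {κ a b G δ : ℝ} (hκ : 0 ≤ κ) (hb : 0 ≤ b) (hG : 0 ≤ G)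
    (h : a ≤ b + G * δ - κ / 2 * δ ^ 2) : √(2 * κ * a) ≤ √(2 * κ * b) + G := by
  have hmul := mul_le_mul_of_nonneg_left h (by positivity : (0 : ℝ) ≤ 2 * κ)
  refine Real.sqrt_le_iff.2 ⟨by positivity, ?_⟩
  nlinarith [sq_nonneg (G - κ * δ), Real.sq_sqrt (by positivity : 0 ≤ 2 * κ * b),
    mul_nonneg hG (Real.sqrt_nonneg (2 * κ * b))]

section Gradient

variable {E : Type*} [NormedAddCommGroup E] [InnerProductSpace ℝ E] [CompleteSpace E]

theorem ContDiff.differentiable_gradient {f : E → ℝ} (hf : ContDiff ℝ 2 f) :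
    Differentiable ℝ (∇ f) :=
  (toDual ℝ E).symm.differentiable.comp
    ((hf.fderiv_right (m := 1) (by norm_num)).differentiable one_ne_zero)

theorem hasGradientAt_sub_half_mul_norm_sq {U : E → ℝ} {x : E} (hU : DifferentiableAt ℝ U x)
    (κ : ℝ) : HasGradientAt (fun y => U y - κ / 2 * ‖y‖ ^ 2) (∇ U x - κ • x) x := by
  rw [hasGradientAt_iff_hasFDerivAt]
  refine (hU.hasFDerivAt.sub
    ((hasStrictFDerivAt_norm_sq x).hasFDerivAt.const_mul (κ / 2))).congr_fderiv ?_
  ext v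
  simp only [sub_apply, smul_apply, coe_innerSL_apply, nsmul_eq_mul, Nat.cast_ofNat, smul_eq_mul,
    gradient, map_sub, LinearIsometryEquiv.apply_symm_apply, map_smul, toDual_apply_apply]
  ring

theorem add_inner_gradient_le_of_fderiv_gradient_nonneg {f : E → ℝ} {x y : E}
    (hf : Differentiable ℝ f) (hgf : Differentiable ℝ (∇ f))
    (hconv : ∀ z ∈ openSegment ℝ x y, 0 ≤ ⟪y - x, fderiv ℝ (∇ f) z (y - x)⟫) :
    f x + ⟪∇ f x, y - x⟫ ≤ f y := by
  set L : ℝ → E := fun t => x + t • (y - x)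
  have hL : ∀ t, HasDerivAt L (y - x) t := fun t => by
    simpa only [one_smul] using ((hasDerivAt_id' t).smul_const (y - x)).const_add x
  have hg : ∀ t, HasDerivAt (f ∘ L) ⟪∇ f (L t), y - x⟫ t := fun t => by
    simpa only [gradient, toDual_symm_apply] using (hf (L t)).hasFDerivAt.comp_hasDerivAt t (hL t)
  have hg' : ∀ t, HasDerivAt (fun s => ⟪∇ f (L s), y - x⟫)
      ⟪fderiv ℝ (∇ f) (L t) (y - x), y - x⟫ t := fun t =>
    (((hgf (L t)).hasFDerivAt.comp_hasDerivAt t (hL t)).inner ℝ (hasDerivAt_const t _)).congr_deriv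
      (by simp)
  have hg'' : ∀ t ∈ Ioo (0 : ℝ) 1, 0 ≤ ⟪fderiv ℝ (∇ f) (L t) (y - x), y - x⟫ := fun t ht => by
    rw [real_inner_comm]
    exact hconv _ (openSegment_eq_image' ℝ x y ▸ mem_image_of_mem _ ht)
  simpa [L] using tangent_le_of_second_deriv_nonneg zero_lt_one hg hg' hg''

theorem add_inner_gradient_add_half_mul_sq_le {U : E → ℝ} {κ : ℝ} {x y : E}
    (hU : ContDiff ℝ 2 U)
    (hconv : ∀ z ∈ openSegment ℝ x y,
      0 ≤ ⟪y - x, fderiv ℝ (∇ fun w => U w - κ / 2 * ‖w‖ ^ 2) z (y - x)⟫) :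
    U x + ⟪∇ U x, y - x⟫ + κ / 2 * ‖y - x‖ ^ 2 ≤ U y := by
  have hUd := hU.differentiable two_ne_zero
  have hgrad : (∇ fun w => U w - κ / 2 * ‖w‖ ^ 2) = fun w => ∇ U w - κ • w :=
    gradient_eq fun w => hasGradientAt_sub_half_mul_norm_sq (hUd w) κ
  have key := add_inner_gradient_le_of_fderiv_gradient_nonneg
    (f := fun w => U w - κ / 2 * ‖w‖ ^ 2)
    ((hU.sub (contDiff_const.mul (contDiff_norm_sq ℝ))).differentiable two_ne_zero)
    (hgrad ▸ hU.differentiable_gradient.sub (differentiable_id.const_smul κ)) hconv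
  rw [hgrad] at key
  simp only [inner_sub_left, real_inner_smul_left, inner_sub_right, norm_sub_sq_real,
    real_inner_self_eq_norm_sq, real_inner_comm x y] at key ⊢
  linarith

end Gradient

/-- Lower bound on the gradient norm for a potential that is `κ`-strongly convex
outside the ball of radius `r`. -/
theorem gradient_lower_bound
    {d : ℕ} (U : EuclideanSpace ℝ (Fin d) → ℝ) (hU : ContDiff ℝ 2 U)
    (κ r C : ℝ) (hκ : 0 < κ) (hr : 0 < r)
    (h : EuclideanSpace ℝ (Fin d) → ℝ)
    (hh : ∀ x, h x = U x - κ / 2 * ‖x‖ ^ 2)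
    (hconv : ∀ x : EuclideanSpace ℝ (Fin d), r < ‖x‖ →
      ∀ v, (0:ℝ) ≤ inner ℝ v ((fderiv ℝ (gradient h) x) v))
    (hinf : IsGLB (Set.range fun q => U q + C) 0)
    (Ct : ℝ)
    (hCt : IsLUB ((fun q => Real.sqrt (2 * κ * (U q + C))) ''
      {q : EuclideanSpace ℝ (Fin d) | ‖q‖ ≤ r}) Ct) :
    ∀ q : EuclideanSpace ℝ (Fin d),
      Real.sqrt (2 * κ * (U q + C)) - Ct ≤ ‖gradient U q‖ := by
  intro q
  obtain rfl : h = fun x => U x - κ / 2 * ‖x‖ ^ 2 := funext hh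
  rcases le_or_gt ‖q‖ r with hq | hq
  · linarith [hCt.1 ⟨q, hq, rfl⟩, norm_nonneg (∇ U q)]
  have hq0 : ‖q‖ ≠ 0 := (hr.trans hq).ne'
  set p := (r / ‖q‖) • q
  have hqp : SameRay ℝ q p := SameRay.sameRay_nonneg_smul_right q (by positivity)
  have hp : ‖p‖ = r := by
    rw [norm_smul, Real.norm_of_nonneg (by positivity), div_mul_cancel₀ r hq0]
  have hpq : ‖p - q‖ = ‖q‖ - r := by
    rw [norm_sub_rev, hqp.norm_sub, hp, abs_of_pos (sub_pos.2 hq)]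
  have hquad := add_inner_gradient_add_half_mul_sq_le hU
    fun z hz => hconv z (lt_norm_of_mem_openSegment_of_sameRay hqp hq hp.ge hz) _
  have hCS := neg_le_of_abs_le (abs_real_inner_le_norm (∇ U q) (p - q))
  rw [hpq] at hquad hCS
  have hsqrt := sqrt_two_mul_le_sqrt_two_mul_add (a := U q + C) (δ := ‖q‖ - r) hκ.le
    (hinf.1 ⟨p, rfl⟩) (norm_nonneg (∇ U q)) (by linarith)
  linarith [hCt.1 ⟨p, hp.le, rfl⟩]
end

section
/- Let U ∈ C³(ℝ^d), q, p ∈ ℝ^d with ⟨p, ∇U(q)⟩ possibly nonzero, and define for ε > 0 the flip rate λ_𝔰(q,p) = ( −g(e^{−(U(q+εp)−U(q))}) + g(e^{−(U(q−εp)−U(q))}) − ε⟨p, ∇U(q)⟩ )⁺. If g(t) = √t, then λ_𝔰(q,p) = O(ε³) as ε → 0. -/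
/-!
Put `g ε = exp (-(U (q + ε • p) - U q) / 2)`. Since `√(exp x) = exp (x / 2)` and
`g'(0) = -⟨p, ∇U(q)⟩ / 2`, the flip rate is the positive part of `g(-ε) - g(ε) + 2 g'(0) ε`.
This function is odd and its derivative vanishes at `0`; its second derivative
`g''(-ε) - g''(ε)` is `O(ε)` because `g''` is differentiable, and integrating twice gives `O(ε³)`.
-/

open Real Filter Asymptotics Topology

theorem isBigO_sub_pow_succ_of_hasDerivAt {E : Type*} [NormedAddCommGroup E] [NormedSpace ℝ E]
    {f f' : ℝ → E} {x₀ : ℝ} {n : ℕ} (hff' : ∀ᶠ x in 𝓝 x₀, HasDerivAt f (f' x) x)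
    (hf' : f' =O[𝓝 x₀] fun x ↦ (x - x₀) ^ n) :
    (fun x ↦ f x - f x₀) =O[𝓝 x₀] fun x ↦ (x - x₀) ^ (n + 1) := by
  obtain ⟨C, hC0, hC⟩ := hf'.exists_nonneg
  obtain ⟨δ, hδ, hball⟩ := Metric.eventually_nhds_iff_ball.1 (hff'.and hC.bound)
  refine .of_bound C (Metric.eventually_nhds_iff_ball.2 ⟨δ, hδ, fun x hx ↦ ?_⟩)
  have hsub : Metric.closedBall x₀ (dist x x₀) ⊆ Metric.ball x₀ δ :=
    Metric.closedBall_subset_ball hx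
  have hbound : ∀ y ∈ Metric.closedBall x₀ (dist x x₀), ‖f' y‖ ≤ C * ‖(x - x₀) ^ n‖ := by
    intro y hy
    refine (hball y (hsub hy)).2.trans (mul_le_mul_of_nonneg_left ?_ hC0)
    simp only [norm_pow, Real.norm_eq_abs]
    exact pow_le_pow_left₀ (abs_nonneg _) (by simpa [Real.dist_eq] using hy) n
  calc ‖f x - f x₀‖ ≤ C * ‖(x - x₀) ^ n‖ * ‖x - x₀‖ :=
        (convex_closedBall x₀ _).norm_image_sub_le_of_norm_hasDerivWithin_le
          (fun y hy ↦ (hball y (hsub hy)).1.hasDerivWithinAt) hbound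
          (Metric.mem_closedBall_self dist_nonneg) (Metric.mem_closedBall.2 le_rfl)
    _ = C * ‖(x - x₀) ^ (n + 1)‖ := by rw [pow_succ, norm_mul, mul_assoc]

theorem ContDiff.comp_neg_sub_add_two_mul_isBigO_pow_three {g : ℝ → ℝ} {a : ℝ}
    (hg : ContDiff ℝ 3 g) (hg0 : HasDerivAt g a 0) :
    (fun ε ↦ g (-ε) - g ε + 2 * a * ε) =O[𝓝 0] fun ε ↦ ε ^ 3 := by
  obtain ⟨hg, -, hg1⟩ := (contDiff_succ_iff_deriv (n := 2)).1 hg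
  obtain ⟨hg1, -, hg2⟩ := (contDiff_succ_iff_deriv (n := 1)).1 hg1
  set g1 := deriv g
  set g2 := deriv g1
  have hd (x : ℝ) : HasDerivAt g (g1 x) x := (hg x).hasDerivAt
  have hd1 (x : ℝ) : HasDerivAt g1 (g2 x) x := (hg1 x).hasDerivAt
  have ha : g1 0 = a := hg0.deriv
  have h2 : (fun ε ↦ g2 (-ε) - g2 ε) =O[𝓝 0] fun ε ↦ ε := by
    have hdiff : Differentiable ℝ g2 := hg2.differentiable one_ne_zero
    simpa using ((hdiff.comp differentiable_neg).sub hdiff 0).isBigO_sub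
  have h1 : (fun ε ↦ -g1 (-ε) - g1 ε - (-a - a)) =O[𝓝 0] fun ε ↦ ε ^ 2 := by
    have hderiv (x : ℝ) : HasDerivAt (fun ε ↦ -g1 (-ε) - g1 ε) (g2 (-x) - g2 x) x := by
      simpa using ((hd1 _).comp_const_sub 0 x).fun_neg.fun_sub (hd1 x)
    simpa [ha] using isBigO_sub_pow_succ_of_hasDerivAt (x₀ := 0) (n := 1)
      (.of_forall hderiv) (by simpa using h2)
  have hderiv (x : ℝ) : HasDerivAt (fun ε ↦ g (-ε) - g ε + 2 * a * ε)
      (-g1 (-x) - g1 x - (-a - a)) x := by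
    have := ((hd _).comp_const_sub 0 x).fun_sub (hd x) |>.fun_add
      ((hasDerivAt_id x).const_mul (2 * a))
    simp only [zero_sub, id, mul_one] at this
    exact this.congr_deriv (by ring)
  simpa using isBigO_sub_pow_succ_of_hasDerivAt (x₀ := 0) (n := 2)
    (.of_forall hderiv) (by simpa using h1)

theorem HasGradientAt.hasDerivAt_comp_line {F : Type*} [NormedAddCommGroup F]
    [InnerProductSpace ℝ F] [CompleteSpace F] {U : F → ℝ} {q v : F} (hU : HasGradientAt U v q)
    (p : F) : HasDerivAt (fun ε : ℝ ↦ U (q + ε • p)) (inner ℝ p v) 0 := by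
  have hline : HasDerivAt (fun ε : ℝ ↦ q + ε • p) p 0 := by
    simpa using ((hasDerivAt_id (0 : ℝ)).smul_const p).const_add q
  have hU' : HasFDerivAt U (InnerProductSpace.toDual ℝ F v) (q + (0 : ℝ) • p) := by
    simpa [hasGradientAt_iff_hasFDerivAt] using hU
  simpa [Function.comp_def, real_inner_comm p v] using hU'.comp_hasDerivAt 0 hline

/-- With the square-root balancing function, the flip rate of the Bouncy Jump sampler
scales as `O(ε³)` as the step size `ε → 0⁺`. -/
theorem bjs_flip_rate_sqrt_cubic
    {d : ℕ} (U : EuclideanSpace ℝ (Fin d) → ℝ) (hU : ContDiff ℝ 3 U)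
    (q p : EuclideanSpace ℝ (Fin d))
    (lamS : ℝ → ℝ)
    (hlamS : ∀ ε : ℝ, lamS ε =
      max (-Real.sqrt (Real.exp (-(U (q + ε • p) - U q)))
           + Real.sqrt (Real.exp (-(U (q - ε • p) - U q)))
           - ε * inner ℝ p (gradient U q)) 0) :
    lamS =O[nhdsWithin 0 (Set.Ioi 0)] fun ε : ℝ => ε ^ 3 := by
  set c := inner ℝ p (gradient U q)
  set g : ℝ → ℝ := fun ε ↦ exp (-(U (q + ε • p) - U q) / 2)
  have hg : ContDiff ℝ 3 g := by fun_prop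
  have hg0 : HasDerivAt g (-c / 2) 0 := by
    have := (((hU.differentiable (by norm_num) q).hasGradientAt.hasDerivAt_comp_line p).sub_const
      (U q)).fun_neg.div_const 2 |>.exp
    simpa only [zero_smul, add_zero, sub_self, neg_zero, zero_div, exp_zero, one_mul] using this
  have hlam (ε : ℝ) : lamS ε = max (g (-ε) - g ε + 2 * (-c / 2) * ε) 0 := by
    rw [hlamS, ← exp_half, ← exp_half]
    simp only [g, neg_smul, ← sub_eq_add_neg]
    ring_nf
  have hle (ε : ℝ) : ‖lamS ε‖ ≤ ‖g (-ε) - g ε + 2 * (-c / 2) * ε‖ := by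
    rw [hlam, Real.norm_of_nonneg (le_max_right _ _)]
    exact max_le (le_norm_self _) (norm_nonneg _)
  exact (isBigO_of_le _ hle).trans
    ((hg.comp_neg_sub_add_two_mul_isBigO_pow_three hg0).mono nhdsWithin_le_nhds)
end

section
/- Let U ∈ C³(ℝ^d) and define λ_𝔰(q,p) = ( −g(e^{−(U(q+εp)−U(q))}) + g(e^{−(U(q−εp)−U(q))}) − ε⟨p, ∇U(q)⟩ )⁺ with g(t) = min{1,t}. Then λ_𝔰(q,p) = O(ε²) as ε → 0. Moreover, without the gradient term (i.e. λ̂(q,p) = (−g(e^{−(U(q+εp)−U(q))}) + g(e^{−(U(q−εp)−U(q))}))⁺ with g(t)=min{1,t}), the rate is O(ε) in general. -/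
open Real Filter Asymptotics Topology

/-! The Metropolis acceptance probability is `min 1 (exp (-t)) = 1 - t⁺ + O(t²)`. Write
`x = U(q+εp) - U(q)`, `y = U(q-εp) - U(q)` and `s = ε⟨p, ∇U(q)⟩`. Taylor's theorem gives
`x = s + O(ε²)` and `y = -s + O(ε²)`, so the first-order part `x⁺ - y⁺` of the flip rate equals
`s⁺ - (-s)⁺ = s` up to `O(ε²)`, and the gradient term cancels it. Without that term only
`x, y = O(ε)` is left. -/

theorem ContDiff.isBigO_sub_sub_deriv {F : Type*} [NormedAddCommGroup F] [NormedSpace ℝ F]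
    {f : ℝ → F} (hf : ContDiff ℝ 2 f) (x₀ : ℝ) :
    (fun x => f x - f x₀ - (x - x₀) • deriv f x₀) =O[𝓝 x₀] fun x => (x - x₀) ^ 2 := by
  have hquad : (fun x => (2⁻¹ * (x - x₀) ^ 2) • iteratedDeriv 2 f x₀) =O[𝓝 x₀]
      fun x => (x - x₀) ^ 2 := by
    refine .of_bound ‖iteratedDeriv 2 f x₀‖ (.of_forall fun x => ?_)
    rw [norm_smul, norm_mul, mul_comm]
    gcongr
    exact mul_le_of_le_one_left (norm_nonneg _) (by norm_num)
  have := (taylor_isLittleO_univ (n := 2) (x₀ := x₀) hf).isBigO.add hquad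
  refine this.congr_left fun x => ?_
  simp only [taylorWithinEval_succ, taylor_within_apply, zero_add, Finset.range_one,
    iteratedDerivWithin_univ, Finset.sum_singleton, Nat.factorial_zero, Nat.cast_one, inv_one,
    pow_zero, mul_one, iteratedDeriv_zero, one_smul, CharP.cast_eq_zero, pow_one, one_mul,
    iteratedDeriv_one, one_add_one_eq_two, Nat.factorial_one]
  abel

theorem ContDiff.isBigO_sub_sub_fderiv_smul {E F : Type*} [NormedAddCommGroup E]
    [NormedSpace ℝ E] [NormedAddCommGroup F] [NormedSpace ℝ F] {f : E → F}
    (hf : ContDiff ℝ 2 f) (x v : E) :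
    (fun t : ℝ => f (x + t • v) - f x - t • fderiv ℝ f x v) =O[𝓝 0] fun t => t ^ 2 := by
  have hline : ContDiff ℝ 2 fun t : ℝ => f (x + t • v) :=
    hf.comp (contDiff_const.add (contDiff_id.smul contDiff_const))
  rw [← (hf.differentiable two_ne_zero x).lineDeriv_eq_fderiv]
  simpa [lineDeriv] using hline.isBigO_sub_sub_deriv 0

theorem Real.exp_neg_le_one_sub_add_sq_div_two {t : ℝ} (ht : 0 ≤ t) :
    exp (-t) ≤ 1 - t + t ^ 2 / 2 := by
  have h := quadratic_le_exp_of_nonneg ht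
  rw [exp_neg, inv_le_iff_one_le_mul₀ (exp_pos t)]
  nlinarith [sq_nonneg (t - 1), sq_nonneg (t * t)]

theorem abs_min_one_exp_neg_sub_le (t : ℝ) :
    |min 1 (exp (-t)) - (1 - max t 0)| ≤ t ^ 2 / 2 := by
  rcases le_total t 0 with ht | ht
  · rw [min_eq_left (one_le_exp (neg_nonneg.2 ht)), max_eq_right ht]
    simp only [sub_zero, sub_self, abs_zero]
    positivity
  · rw [min_eq_right (exp_le_one_iff.2 (neg_nonpos.2 ht)), max_eq_left ht, abs_le]
    constructor
    · linarith [add_one_le_exp (-t), sq_nonneg t]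
    · linarith [exp_neg_le_one_sub_add_sq_div_two ht]

theorem abs_metropolis_flip_le (x y s : ℝ) :
    |-min 1 (exp (-x)) + min 1 (exp (-y)) - s| ≤ |x - s| + |y + s| + (x ^ 2 + y ^ 2) / 2 := by
  have hx := abs_min_one_exp_neg_sub_le x
  have hy := abs_min_one_exp_neg_sub_le y
  have hxs := abs_max_sub_max_le_abs x s 0
  have hys := abs_max_sub_max_le_abs y (-s) 0
  have hs := max_zero_sub_max_neg_zero_eq_self s
  rw [sub_neg_eq_add] at hys
  rw [abs_le] at *
  constructor <;> linarith

theorem isBigO_metropolis_flip {α : Type*} {l : Filter α} {x y s r : α → ℝ}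
    (hx : (fun a => x a - s a) =O[l] r) (hy : (fun a => y a + s a) =O[l] r)
    (hx2 : (fun a => x a ^ 2) =O[l] r) (hy2 : (fun a => y a ^ 2) =O[l] r) :
    (fun a => max (-min 1 (exp (-x a)) + min 1 (exp (-y a)) - s a) 0) =O[l] r := by
  have hbound : ∀ a, ‖max (-min 1 (exp (-x a)) + min 1 (exp (-y a)) - s a) 0‖ ≤
      ‖|x a - s a| + |y a + s a| + (x a ^ 2 + y a ^ 2) / 2‖ := fun a => by
    rw [Real.norm_eq_abs, Real.norm_eq_abs, abs_of_nonneg (le_max_right _ 0),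
      abs_of_nonneg (by positivity)]
    exact max_le ((le_abs_self _).trans (abs_metropolis_flip_le _ _ _)) (by positivity)
  have hsq : (fun a => (x a ^ 2 + y a ^ 2) / 2) =O[l] r :=
    ((hx2.add hy2).const_mul_left 2⁻¹).congr_left fun a => by ring
  exact (isBigO_of_le l hbound).trans
    (((isBigO_abs_left.2 hx).add (isBigO_abs_left.2 hy)).add hsq)

/-- With the Metropolis balancing function `g(t) = min{1,t}`, the flip rate of the
Bouncy Jump sampler scales as `O(ε²)`, while the rate without the gradient (bounce)
term only scales as `O(ε)` in general. -/
theorem bjs_flip_rate_metropolis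
    {d : ℕ} (U : EuclideanSpace ℝ (Fin d) → ℝ) (hU : ContDiff ℝ 3 U)
    (q p : EuclideanSpace ℝ (Fin d))
    (g : ℝ → ℝ) (hg : ∀ t, g t = min 1 t)
    (lamS lamHat : ℝ → ℝ)
    (hlamS : ∀ ε : ℝ, lamS ε =
      max (-g (Real.exp (-(U (q + ε • p) - U q)))
           + g (Real.exp (-(U (q - ε • p) - U q)))
           - ε * inner ℝ p (gradient U q)) 0)
    (hlamHat : ∀ ε : ℝ, lamHat ε =
      max (-g (Real.exp (-(U (q + ε • p) - U q)))
           + g (Real.exp (-(U (q - ε • p) - U q)))) 0) :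
    (lamS =O[nhdsWithin 0 (Set.Ioi 0)] fun ε : ℝ => ε ^ 2) ∧
    (lamHat =O[nhdsWithin 0 (Set.Ioi 0)] fun ε : ℝ => ε) := by
  simp only [hg] at hlamS hlamHat
  have hU2 : ContDiff ℝ 2 U := hU.of_le (by norm_num)
  have hfd (v) : fderiv ℝ U q v = inner ℝ v (gradient U q) := by
    rw [real_inner_comm, inner_gradient_left]
  have hx : (fun ε : ℝ => U (q + ε • p) - U q - ε * inner ℝ p (gradient U q)) =O[𝓝 0]
      fun ε => ε ^ 2 := by
    simpa only [hfd, smul_eq_mul] using hU2.isBigO_sub_sub_fderiv_smul q p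
  have hy : (fun ε : ℝ => U (q - ε • p) - U q + ε * inner ℝ p (gradient U q)) =O[𝓝 0]
      fun ε => ε ^ 2 := by
    simpa only [hfd, smul_eq_mul, smul_neg, ← sub_eq_add_neg, inner_neg_left, mul_neg,
      sub_neg_eq_add] using hU2.isBigO_sub_sub_fderiv_smul q (-p)
  have hsq : (fun ε : ℝ => ε ^ 2) =O[𝓝 0] fun ε => ε := (isLittleO_pow_id one_lt_two).isBigO
  have hlin : (fun ε : ℝ => ε * inner ℝ p (gradient U q)) =O[𝓝 0] fun ε => ε :=
    ((isBigO_refl _ _).const_mul_left _).congr_left fun ε => mul_comm _ _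
  have hx1 : (fun ε : ℝ => U (q + ε • p) - U q) =O[𝓝 0] fun ε => ε :=
    ((hx.trans hsq).add hlin).congr_left fun ε => by ring
  have hy1 : (fun ε : ℝ => U (q - ε • p) - U q) =O[𝓝 0] fun ε => ε :=
    ((hy.trans hsq).sub hlin).congr_left fun ε => by ring
  constructor
  · rw [funext hlamS]
    exact (isBigO_metropolis_flip hx hy (hx1.pow 2) (hy1.pow 2)).mono nhdsWithin_le_nhds
  · have := isBigO_metropolis_flip (s := 0) (by simpa using hx1) (by simpa using hy1)
      ((hx1.pow 2).trans hsq) ((hy1.pow 2).trans hsq)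
    simpa [funext hlamHat] using this.mono nhdsWithin_le_nhds
end
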